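/- The discriminant of the trinomial x^n + c x^{n-1} + d equals (-1)^{n(n-1)/2} d^{n-2} (n^n d + (1-n)^{n-1} c^n). -/

import Mathlib

/-! The discriminant equals `(-1) ^ (n choose 2) * ∏ i, f'(θ i)`. For `f = X^n + c X^(n-1) + d` we
have `f' = X^(n-2) (n X + (n-1) c)`, so this product splits into `(∏ i, θ i)^(n-2) = ((-1)^n d)^(n-2)`
and `∏ i, (n θ i + (n-1) c) = (-n)^n f(-(n-1) c / n) = (-1)^n (n^n d + (1-n)^(n-1) c^n)`. -/

open Polynomial Finset

section RootProducts

variable {ι : Type*}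

theorem prod_prod_erase_eq_prod_filter_lt {M : Type*} [CommMonoid M] [Fintype ι] [LinearOrder ι]
    (f : ι → ι → M) :
    ∏ i, ∏ j ∈ univ.erase i, f i j =
      ∏ q ∈ univ.filter (fun q : ι × ι => q.1 < q.2), f q.1 q.2 * f q.2 q.1 := by
  have h_ne : ∏ i, ∏ j ∈ univ.erase i, f i j =
      ∏ q ∈ univ.filter (fun q : ι × ι => q.1 ≠ q.2), f q.1 q.2 := by
    rw [prod_filter, Fintype.prod_prod_type]
    refine prod_congr rfl fun i _ => ?_
    rw [← prod_filter, filter_ne]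
  have h_gt : ∏ q ∈ univ.filter (fun q : ι × ι => q.2 < q.1), f q.1 q.2 =
      ∏ q ∈ univ.filter (fun q : ι × ι => q.1 < q.2), f q.2 q.1 :=
    prod_equiv (Equiv.prodComm ι ι) (by simp) (by simp)
  rw [prod_mul_distrib, ← h_gt, h_ne,
    ← prod_filter_mul_prod_filter_not _ (fun q : ι × ι => q.1 < q.2), filter_filter, filter_filter]
  congr 2 <;> ext q <;> simp only [mem_filter, mem_univ, true_and] <;> grind

variable {R : Type*} [CommRing R]

theorem prod_filter_lt_sub_sq [Fintype ι] [LinearOrder ι] (θ : ι → R) :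
    ∏ q ∈ univ.filter (fun q : ι × ι => q.1 < q.2), (θ q.1 - θ q.2) ^ 2 =
      (-1) ^ (Fintype.card ι).choose 2 * ∏ i, ∏ j ∈ univ.erase i, (θ i - θ j) := by
  have hcard : #(univ.filter (fun q : ι × ι => q.1 < q.2)) = (Fintype.card ι).choose 2 := by
    simpa using card_product_filter_lt (s := (univ : Finset ι))
  rw [prod_prod_erase_eq_prod_filter_lt, ← hcard, ← prod_const, ← prod_mul_distrib]
  exact prod_congr rfl fun q _ => by ring

theorem eval_derivative_prod_X_sub_C [DecidableEq ι] {s : Finset ι} (θ : ι → R) {i : ι}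
    (hi : i ∈ s) :
    eval (θ i) (derivative (∏ j ∈ s, (X - C (θ j)))) = ∏ j ∈ s.erase i, (θ i - θ j) :=
  (Lagrange.eval_nodal_derivative_eval_node_eq hi).trans Lagrange.eval_nodal

theorem prod_mul_add_eq_neg_pow_mul_eval {u v a : R} (ha : u * a + v = 0) (s : Finset ι)
    (θ : ι → R) :
    ∏ i ∈ s, (u * θ i + v) = (-u) ^ #s * eval a (∏ j ∈ s, (X - C (θ j))) := by
  rw [eval_prod, ← prod_const, ← prod_mul_distrib]
  refine prod_congr rfl fun i _ => ?_
  simp only [eval_sub, eval_X, eval_C]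
  linear_combination ha

end RootProducts

section Trinomial

variable {K : Type*} [Field K] (n : ℕ) (c d : K)

theorem eval_derivative_trinomial (hn : 2 ≤ n) (x : K) :
    eval x (derivative (X ^ n + C c * X ^ (n - 1) + C d)) =
      x ^ (n - 2) * (n * x + (n - 1) * c) := by
  obtain ⟨m, rfl⟩ : ∃ m, n = m + 2 := ⟨n - 2, by omega⟩
  simp only [derivative_add, derivative_X_pow, derivative_C_mul_X_pow, derivative_C, eval_add,
    eval_mul, eval_C, eval_pow, eval_X, add_zero, Nat.add_sub_cancel]
  push_cast
  ring

theorem neg_pow_mul_eval_trinomial (hn : (n : K) ≠ 0) :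
    (-(n : K)) ^ n * eval (-((n - 1) * c / n)) (X ^ n + C c * X ^ (n - 1) + C d) =
      (-1) ^ n * (n ^ n * d + (1 - n) ^ (n - 1) * c ^ n) := by
  have hn₀ : n ≠ 0 := by rintro rfl; simp at hn
  obtain ⟨m, rfl⟩ : ∃ m, n = m + 1 := ⟨n - 1, by omega⟩
  have ha : ((m + 1 : ℕ) : K) * -((((m + 1 : ℕ) : K) - 1) * c / (m + 1 : ℕ)) = -(m * c) := by
    field_simp; push_cast; ring
  simp only [eval_add, eval_mul, eval_C, eval_pow, eval_X, Nat.add_sub_cancel]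
  rw [neg_pow, mul_assoc]
  congr 1
  generalize -((((m + 1 : ℕ) : K) - 1) * c / (m + 1 : ℕ)) = a at ha ⊢
  calc ((m + 1 : ℕ) : K) ^ (m + 1) * (a ^ (m + 1) + c * a ^ m + d)
      = (((m + 1 : ℕ) : K) * a) ^ m * (((m + 1 : ℕ) : K) * a + (m + 1 : ℕ) * c)
          + ((m + 1 : ℕ) : K) ^ (m + 1) * d := by ring
    _ = _ := by rw [ha]; push_cast; ring

end Trinomial

theorem prod_filter_lt_sub_sq_of_eq_trinomial {K : Type*} [Field K] (n : ℕ) (hn : 2 ≤ n)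
    (hnK : (n : K) ≠ 0) (c d : K) (θ : Fin n → K)
    (h : (X ^ n + C c * X ^ (n - 1) + C d : K[X]) = ∏ i, (X - C (θ i))) :
    ∏ q ∈ univ.filter (fun q : Fin n × Fin n => q.1 < q.2), (θ q.1 - θ q.2) ^ 2 =
      (-1) ^ (n * (n - 1) / 2) * d ^ (n - 2) * (n ^ n * d + (1 - n) ^ (n - 1) * c ^ n) := by
  have h_roots : ∏ i, θ i = (-1) ^ n * d := by
    have := prod_mul_add_eq_neg_pow_mul_eval (u := (1 : K)) (v := 0) (a := 0) (by simp) univ θ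
    rw [← h] at this
    simpa [zero_pow (by omega : n ≠ 0), zero_pow (by omega : n - 1 ≠ 0)] using this
  have h_lin : ∏ i, ((n : K) * θ i + (n - 1) * c) =
      (-1) ^ n * (n ^ n * d + (1 - n) ^ (n - 1) * c ^ n) := by
    rw [prod_mul_add_eq_neg_pow_mul_eval (a := -((n - 1) * c / n)) (by field_simp; ring), ← h,
      card_univ, Fintype.card_fin, neg_pow_mul_eval_trinomial n c d hnK]
  have h_sign : ((-1 : K) ^ n) ^ (n - 2) * (-1) ^ n = 1 := by
    rw [← pow_mul, ← pow_add, ← mul_add_one, show n - 2 + 1 = n - 1 by omega]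
    exact (Nat.even_mul_pred_self n).neg_one_pow
  rw [prod_filter_lt_sub_sq, Fintype.card_fin, Nat.choose_two_right]
  simp_rw [← eval_derivative_prod_X_sub_C θ (mem_univ _), ← h, eval_derivative_trinomial n c d hn,
    prod_mul_distrib, prod_pow, h_roots, h_lin]
  linear_combination
    (-1) ^ (n * (n - 1) / 2) * d ^ (n - 2) * (n ^ n * d + (1 - n) ^ (n - 1) * c ^ n) * h_sign

theorem stmt1 (n : ℕ) (hn : 2 ≤ n) (c d : ℤ) (θ : Fin n → ℂ)
    (h : (X ^ n + C (c : ℂ) * X ^ (n - 1) + C (d : ℂ) : ℂ[X]) = ∏ i, (X - C (θ i))) :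
    ∏ q ∈ Finset.univ.filter (fun q : Fin n × Fin n => q.1 < q.2), (θ q.1 - θ q.2) ^ 2 =
      (-1) ^ (n * (n - 1) / 2) * (d : ℂ) ^ (n - 2) *
        ((n : ℂ) ^ n * (d : ℂ) + ((1 : ℂ) - n) ^ (n - 1) * (c : ℂ) ^ n) :=
  prod_filter_lt_sub_sq_of_eq_trinomial n hn (Nat.cast_ne_zero.2 (by omega)) _ _ θ h
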